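/- arXiv:1902.10087 — 4 statements merged into one kernel-verified Lean document; each statement's English description precedes it below -/
import Mathlib

section
/- Let H be a finite-dimensional complex Hilbert space, let Θ_1,...,Θ_m be Hermitian operators on H and θ_1,...,θ_m real numbers. Suppose λ_1,...,λ_m are real numbers such that the density operator ρ* := exp(Σ_i λ_i Θ_i)/Tr[exp(Σ_i λ_i Θ_i)] satisfies Tr[ρ* Θ_i] = θ_i for all i. Then every density operator ρ on H satisfying Tr[ρ Θ_i] = θ_i for all i has S(ρ) ≤ S(ρ*), with equality if and only if ρ = ρ*. -/
open scoped Matrix ComplexOrder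

variable {A B C : Type*}

/-- Functional calculus for Hermitian matrices: apply `f : ℝ → ℝ` to the eigenvalues. -/
noncomputable def matFun {n : Type*} [Fintype n] [DecidableEq n]
    (f : ℝ → ℝ) (ρ : Matrix n n ℂ) : Matrix n n ℂ :=
  if h : ρ.IsHermitian then
    (h.eigenvectorUnitary : Matrix n n ℂ) *
      Matrix.diagonal (fun i => (f (h.eigenvalues i) : ℂ)) *
        (star (h.eigenvectorUnitary : Matrix n n ℂ))
  else 0

/-- Matrix logarithm via functional calculus. -/
noncomputable def matLog {n : Type*} [Fintype n] [DecidableEq n] (ρ : Matrix n n ℂ) :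
    Matrix n n ℂ := matFun Real.log ρ

/-- Matrix square root via functional calculus. -/
noncomputable def matSqrt {n : Type*} [Fintype n] [DecidableEq n] (ρ : Matrix n n ℂ) :
    Matrix n n ℂ := matFun Real.sqrt ρ

/-- Matrix inverse square root via functional calculus. -/
noncomputable def matInvSqrt {n : Type*} [Fintype n] [DecidableEq n] (ρ : Matrix n n ℂ) :
    Matrix n n ℂ := matFun (fun x => (Real.sqrt x)⁻¹) ρ

/-- A density operator: positive semidefinite with trace one. -/
def IsDensity {n : Type*} [Fintype n] (ρ : Matrix n n ℂ) : Prop :=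
  ρ.PosSemidef ∧ ρ.trace = 1

/-- The von Neumann entropy `S(ρ) = -Tr(ρ log ρ)`, computed via eigenvalues. -/
noncomputable def vnEntropy {n : Type*} [Fintype n] [DecidableEq n] (ρ : Matrix n n ℂ) : ℝ :=
  if h : ρ.IsHermitian then -∑ i, h.eigenvalues i * Real.log (h.eigenvalues i) else 0

/-- The quantum relative entropy `S(ρ‖σ) = Tr[ρ (log ρ - log σ)]`. -/
noncomputable def relEntropy {n : Type*} [Fintype n] [DecidableEq n]
    (ρ σ : Matrix n n ℂ) : ℝ := ((ρ * (matLog ρ - matLog σ)).trace).re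

section Tripartite

variable [Fintype A] [Fintype B] [Fintype C]

/-- Partial trace over the third factor. -/
noncomputable def ptC (ρ : Matrix (A × B × C) (A × B × C) ℂ) : Matrix (A × B) (A × B) ℂ :=
  fun x y => ∑ c : C, ρ (x.1, x.2, c) (y.1, y.2, c)

/-- Partial trace over the first factor. -/
noncomputable def ptA (ρ : Matrix (A × B × C) (A × B × C) ℂ) : Matrix (B × C) (B × C) ℂ :=
  fun x y => ∑ a : A, ρ (a, x) (a, y)

/-- Partial trace over the first and third factors. -/
noncomputable def ptAC (ρ : Matrix (A × B × C) (A × B × C) ℂ) : Matrix B B ℂ :=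
  fun b b' => ∑ a : A, ∑ c : C, ρ (a, b, c) (a, b', c)

/-- Partial trace over the first and second factors. -/
noncomputable def ptAB (ρ : Matrix (A × B × C) (A × B × C) ℂ) : Matrix C C ℂ :=
  fun c c' => ∑ a : A, ∑ b : B, ρ (a, b, c) (a, b, c')

/-- Partial trace over the second and third factors. -/
noncomputable def ptBC (ρ : Matrix (A × B × C) (A × B × C) ℂ) : Matrix A A ℂ :=
  fun a a' => ∑ b : B, ∑ c : C, ρ (a, b, c) (a', b, c)

/-- Partial trace of a bipartite state over its first factor. -/
noncomputable def bptFst {X Y : Type*} [Fintype X] [Fintype Y]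
    (M : Matrix (X × Y) (X × Y) ℂ) : Matrix Y Y ℂ :=
  fun b b' => ∑ x : X, M (x, b) (x, b')

/-- Partial trace of a bipartite state over its second factor. -/
noncomputable def bptSnd {X Y : Type*} [Fintype X] [Fintype Y]
    (M : Matrix (X × Y) (X × Y) ℂ) : Matrix X X ℂ :=
  fun a a' => ∑ y : Y, M (a, y) (a', y)

variable [DecidableEq A] [DecidableEq B] [DecidableEq C]

/-- Extend an operator on the first two factors to the tripartite space: `M ⊗ id_C`. -/
noncomputable def extAB (M : Matrix (A × B) (A × B) ℂ) :
    Matrix (A × B × C) (A × B × C) ℂ :=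
  fun x y => M (x.1, x.2.1) (y.1, y.2.1) * (if x.2.2 = y.2.2 then 1 else 0)

/-- Extend an operator on the last two factors to the tripartite space: `id_A ⊗ M`. -/
noncomputable def extBC (M : Matrix (B × C) (B × C) ℂ) :
    Matrix (A × B × C) (A × B × C) ℂ :=
  fun x y => (if x.1 = y.1 then 1 else 0) * M x.2 y.2

/-- Extend an operator on the middle factor to the tripartite space: `id_A ⊗ M ⊗ id_C`. -/
noncomputable def extB (M : Matrix B B ℂ) : Matrix (A × B × C) (A × B × C) ℂ :=
  fun x y => (if x.1 = y.1 then 1 else 0) * M x.2.1 y.2.1 * (if x.2.2 = y.2.2 then 1 else 0)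

/-- Quantum conditional mutual information `I_ρ(A:C|B)`. -/
noncomputable def qcmi (ρ : Matrix (A × B × C) (A × B × C) ℂ) : ℝ :=
  vnEntropy (ptC ρ) + vnEntropy (ptA ρ) - vnEntropy (ptAC ρ) - vnEntropy ρ

end Tripartite


/-!
Klein's inequality does the work. Writing `ρ = ∑ₖ pₖ |vₖ⟩⟨vₖ|` and `σ = ∑ⱼ qⱼ |uⱼ⟩⟨uⱼ|`, the
overlaps `Tⱼₖ = |⟨uⱼ, vₖ⟩|²` form a doubly stochastic matrix and
`S(ρ‖σ) = ∑ⱼₖ Tⱼₖ pₖ (log pₖ - log qⱼ) ≥ ∑ⱼₖ Tⱼₖ (pₖ - qⱼ) = Tr ρ - Tr σ`, termwise by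
`log x ≤ x - 1`, with equality only if `pₖ = qⱼ` whenever `Tⱼₖ ≠ 0`, i.e. only if `ρ = σ`.
For the Gibbs state `ρ* = e^H / Z` of `H = ∑ᵢ λᵢ Θᵢ` we have `log ρ* = H - log Z`, so for a
state `ρ` with the same expectations `Tr[ρ Θᵢ] = θᵢ` the cross term `Tr[ρ log ρ*]` equals
`Tr[ρ* log ρ*]`, and hence `S(ρ*) - S(ρ) = S(ρ‖ρ*) ≥ 0`.
-/

open Matrix Real Unitary InformationTheory

lemma mul_log_sub_log_sub_sub_eq_mul_klFun {p q : ℝ} (hq : q ≠ 0) :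
    p * (log p - log q) - (p - q) = q * klFun (p / q) := by
  have hlog : p * log (p / q) = p * (log p - log q) := by
    rcases eq_or_ne p 0 with rfl | hp
    · simp
    · rw [log_div hp hq]
  rw [klFun_apply, ← hlog]
  field_simp
  ring

lemma mul_mul_klFun_div_nonneg {t p q : ℝ} (ht : 0 ≤ t) (hp : 0 ≤ p) (hq : 0 < q) :
    0 ≤ t * (q * klFun (p / q)) :=
  mul_nonneg ht (mul_nonneg hq.le (klFun_nonneg (div_nonneg hp hq.le)))

section DoublyStochastic

variable {n : Type*} [Fintype n] [DecidableEq n] {T : Matrix n n ℝ} {p q : n → ℝ}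

lemma sum_mul_log_sub_sum_mul_log_sub_eq_sum_klFun (hT : T ∈ doublyStochastic ℝ n)
    (hq : ∀ j, q j ≠ 0) :
    (∑ k, p k * log (p k) - ∑ j, ∑ k, T j k * p k * log (q j)) - (∑ k, p k - ∑ j, q j) =
      ∑ j, ∑ k, T j k * (q j * klFun (p k / q j)) := by
  simp_rw [← mul_log_sub_log_sub_sub_eq_mul_klFun (hq _)]
  have hcol (f : n → ℝ) : ∑ j, ∑ k, T j k * f k = ∑ k, f k := by
    rw [Finset.sum_comm]
    simp [← Finset.sum_mul, sum_col_of_mem_doublyStochastic hT]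
  have hrow (f : n → ℝ) : ∑ j, ∑ k, T j k * f j = ∑ j, f j := by
    simp [← Finset.sum_mul, sum_row_of_mem_doublyStochastic hT]
  have hexpand : ∀ j k, T j k * (p k * (log (p k) - log (q j)) - (p k - q j)) =
      T j k * (p k * log (p k)) - T j k * p k * log (q j) - T j k * p k + T j k * q j := by
    intro j k
    ring
  simp only [hexpand, Finset.sum_add_distrib, Finset.sum_sub_distrib, hcol, hrow]
  ring

theorem sum_sub_sum_le_sum_mul_log_sub_sum_mul_log (hT : T ∈ doublyStochastic ℝ n)
    (hp : ∀ k, 0 ≤ p k) (hq : ∀ j, 0 < q j) :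
    ∑ k, p k - ∑ j, q j ≤ ∑ k, p k * log (p k) - ∑ j, ∑ k, T j k * p k * log (q j) := by
  have hgap := sum_mul_log_sub_sum_mul_log_sub_eq_sum_klFun (p := p) hT fun j => (hq j).ne'
  have hnonneg : 0 ≤ ∑ j, ∑ k, T j k * (q j * klFun (p k / q j)) :=
    Finset.sum_nonneg fun j _ => Finset.sum_nonneg fun k _ =>
      mul_mul_klFun_div_nonneg (nonneg_of_mem_doublyStochastic hT) (hp k) (hq j)
  linarith

theorem eq_of_sum_sub_sum_eq_sum_mul_log_sub_sum_mul_log (hT : T ∈ doublyStochastic ℝ n)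
    (hp : ∀ k, 0 ≤ p k) (hq : ∀ j, 0 < q j)
    (h : ∑ k, p k - ∑ j, q j = ∑ k, p k * log (p k) - ∑ j, ∑ k, T j k * p k * log (q j))
    {j k : n} (hjk : T j k ≠ 0) : p k = q j := by
  have hgap := sum_mul_log_sub_sum_mul_log_sub_eq_sum_klFun (p := p) hT fun j => (hq j).ne'
  rw [h, sub_self, eq_comm] at hgap
  have hnonneg : ∀ j k, 0 ≤ T j k * (q j * klFun (p k / q j)) := fun j k =>
    mul_mul_klFun_div_nonneg (nonneg_of_mem_doublyStochastic hT) (hp k) (hq j)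
  rw [Finset.sum_eq_zero_iff_of_nonneg fun j _ => Finset.sum_nonneg fun k _ => hnonneg j k] at hgap
  have hterm := (Finset.sum_eq_zero_iff_of_nonneg fun k _ => hnonneg j k).1
    (hgap j (Finset.mem_univ _)) k (Finset.mem_univ _)
  rw [mul_eq_zero, mul_eq_zero, klFun_eq_zero_iff (div_nonneg (hp k) (hq j).le),
    div_eq_one_iff_eq (hq j).ne'] at hterm
  rcases hterm with hT0 | hq0 | hpq
  exacts [absurd hT0 hjk, absurd hq0 (hq j).ne', hpq]

end DoublyStochastic

section Unitary

variable {n : Type*} [Fintype n] [DecidableEq n]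

lemma map_normSq_mem_doublyStochastic {W : Matrix n n ℂ} (hW : W ∈ unitaryGroup n ℂ) :
    W.map Complex.normSq ∈ doublyStochastic ℝ n := by
  refine mem_doublyStochastic_iff_sum.2
    ⟨fun _ _ => Complex.normSq_nonneg _, fun j => ?_, fun k => ?_⟩
  · have h := congr_fun (congr_fun (mem_unitaryGroup_iff.1 hW) j) j
    simp only [mul_apply, star_apply, Complex.star_def, Complex.mul_conj, one_apply_eq] at h
    exact_mod_cast h
  · have h := congr_fun (congr_fun (mem_unitaryGroup_iff'.1 hW) k) k
    simp only [mul_apply, star_apply, Complex.star_def, mul_comm (starRingEnd ℂ _),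
      Complex.mul_conj, one_apply_eq] at h
    exact_mod_cast h

lemma trace_diagonal_mul_star_mul_diagonal_mul (W : Matrix n n ℂ) (a b : n → ℝ) :
    (diagonal (fun k => (b k : ℂ)) * (star W * diagonal (fun j => (a j : ℂ)) * W)).trace =
      ((∑ j, ∑ k, Complex.normSq (W j k) * b k * a j : ℝ) : ℂ) := by
  simp only [trace, diag, diagonal_mul]
  simp only [mul_apply (M := star W * _), mul_diagonal, star_apply, Finset.mul_sum]
  rw [Finset.sum_comm]
  push_cast
  refine Finset.sum_congr rfl fun j _ => Finset.sum_congr rfl fun k _ => ?_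
  rw [Complex.normSq_eq_conj_mul_self, Complex.star_def]
  ring

lemma trace_conj_diagonal_mul_conj_diagonal (U V : unitaryGroup n ℂ) (a b : n → ℝ) :
    (conjStarAlgAut ℂ _ V (diagonal (fun k => (b k : ℂ))) *
        conjStarAlgAut ℂ _ U (diagonal (fun j => (a j : ℂ)))).trace =
      ((∑ j, ∑ k, Complex.normSq ((star U * V : Matrix n n ℂ) j k) * b k * a j : ℝ) : ℂ) := by
  rw [← trace_diagonal_mul_star_mul_diagonal_mul]
  simp only [conjStarAlgAut_apply, Unitary.coe_star, star_mul, star_star, Matrix.mul_assoc]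
  rw [trace_mul_comm]
  simp only [Matrix.mul_assoc]

lemma conj_diagonal_eq_conj_diagonal_of_forall_ne_zero (U V : unitaryGroup n ℂ) {p q : n → ℝ}
    (h : ∀ j k, (star U * V : Matrix n n ℂ) j k ≠ 0 → p k = q j) :
    conjStarAlgAut ℂ _ V (diagonal (fun k => (p k : ℂ))) =
      conjStarAlgAut ℂ _ U (diagonal (fun j => (q j : ℂ))) := by
  set W : Matrix n n ℂ := star U * V
  have hV : (V : Matrix n n ℂ) = U * W := by
    simp [W, ← mul_assoc, Unitary.mul_star_self_of_mem U.2]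
  have hW : W * star W = 1 := by
    simp [W, star_mul, Matrix.mul_assoc, ← Matrix.mul_assoc (V : Matrix n n ℂ),
      Unitary.mul_star_self_of_mem V.2, Unitary.star_mul_self_of_mem U.2]
  have hcomm : W * diagonal (fun k => (p k : ℂ)) = diagonal (fun j => (q j : ℂ)) * W := by
    ext j k
    rw [mul_diagonal, diagonal_mul]
    by_cases hjk : W j k = 0
    · simp [hjk]
    · rw [h j k hjk, mul_comm]
  simp only [conjStarAlgAut_apply, hV, star_mul, Matrix.mul_assoc]
  rw [← Matrix.mul_assoc W, hcomm, Matrix.mul_assoc, ← Matrix.mul_assoc W, hW, Matrix.one_mul]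

end Unitary

section Entropy

variable {n : Type*} [Fintype n] [DecidableEq n] {ρ σ : Matrix n n ℂ}

lemma matFun_eq_cfc (hρ : ρ.IsHermitian) (f : ℝ → ℝ) : matFun f ρ = cfc f ρ := by
  rw [matFun, dif_pos hρ, hρ.cfc_eq, IsHermitian.cfc, conjStarAlgAut_apply]
  rfl

lemma Matrix.IsHermitian.trace_cfc (hρ : ρ.IsHermitian) (f : ℝ → ℝ) :
    (cfc f ρ).trace = ∑ i, (f (hρ.eigenvalues i) : ℂ) := by
  rw [hρ.cfc_eq, IsHermitian.cfc, conjStarAlgAut_apply, trace_mul_cycle]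
  simp

lemma vnEntropy_eq_neg_re_trace_mul_matLog (hρ : ρ.IsHermitian) :
    vnEntropy ρ = -(ρ * matLog ρ).trace.re := by
  have h : ρ * cfc log ρ = cfc (fun x => x * log x) ρ := by
    rw [cfc_mul (fun x => x) log ρ (hg := ρ.finite_real_spectrum.continuousOn _), cfc_id' ℝ ρ]
  rw [matLog, matFun_eq_cfc hρ, h, hρ.trace_cfc, vnEntropy, dif_pos hρ]
  simp

lemma relEntropy_eq_sum_eigenvalues (hρ : ρ.IsHermitian) (hσ : σ.IsHermitian) :
    relEntropy ρ σ = ∑ k, hρ.eigenvalues k * log (hρ.eigenvalues k) -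
      ∑ j, ∑ k, Complex.normSq ((star hσ.eigenvectorUnitary * hρ.eigenvectorUnitary :
        Matrix n n ℂ) j k) * hρ.eigenvalues k * log (hσ.eigenvalues j) := by
  have hself := vnEntropy_eq_neg_re_trace_mul_matLog hρ
  rw [vnEntropy, dif_pos hρ, neg_inj] at hself
  have hcross : (ρ * matLog σ).trace = ((∑ j, ∑ k, Complex.normSq ((star hσ.eigenvectorUnitary *
      hρ.eigenvectorUnitary : Matrix n n ℂ) j k) * hρ.eigenvalues k * log (hσ.eigenvalues j) :
        ℝ) : ℂ) := by
    rw [matLog, matFun_eq_cfc hσ, hσ.cfc_eq, IsHermitian.cfc]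
    nth_rewrite 1 [hρ.spectral_theorem]
    exact trace_conj_diagonal_mul_conj_diagonal _ _ _ _
  rw [relEntropy, mul_sub, trace_sub, Complex.sub_re, ← hself, hcross, Complex.ofReal_re]

lemma re_trace_sub_trace_eq_sum_eigenvalues_sub (hρ : ρ.IsHermitian) (hσ : σ.IsHermitian) :
    (ρ.trace - σ.trace).re = ∑ k, hρ.eigenvalues k - ∑ j, hσ.eigenvalues j := by
  simp [hρ.trace_eq_sum_eigenvalues, hσ.trace_eq_sum_eigenvalues]

theorem re_trace_sub_le_relEntropy (hρ : ρ.PosSemidef) (hσ : σ.PosDef) :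
    (ρ.trace - σ.trace).re ≤ relEntropy ρ σ := by
  rw [re_trace_sub_trace_eq_sum_eigenvalues_sub hρ.1 hσ.1, relEntropy_eq_sum_eigenvalues hρ.1 hσ.1]
  exact sum_sub_sum_le_sum_mul_log_sub_sum_mul_log
    (map_normSq_mem_doublyStochastic (star hσ.1.eigenvectorUnitary * hρ.1.eigenvectorUnitary).2)
    hρ.eigenvalues_nonneg hσ.eigenvalues_pos

theorem eq_of_relEntropy_eq_re_trace_sub (hρ : ρ.PosSemidef) (hσ : σ.PosDef)
    (h : relEntropy ρ σ = (ρ.trace - σ.trace).re) : ρ = σ := by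
  rw [re_trace_sub_trace_eq_sum_eigenvalues_sub hρ.1 hσ.1,
    relEntropy_eq_sum_eigenvalues hρ.1 hσ.1] at h
  rw [hρ.1.spectral_theorem, hσ.1.spectral_theorem]
  refine conj_diagonal_eq_conj_diagonal_of_forall_ne_zero _ _ fun j k hjk => ?_
  exact eq_of_sum_sub_sum_eq_sum_mul_log_sub_sum_mul_log
    (map_normSq_mem_doublyStochastic (star hσ.1.eigenvectorUnitary * hρ.1.eigenvectorUnitary).2)
    hρ.eigenvalues_nonneg hσ.eigenvalues_pos h.symm (by simpa using hjk)

lemma relEntropy_eq_vnEntropy_sub_vnEntropy (hρ : ρ.IsHermitian) (hσ : σ.IsHermitian)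
    (h : (ρ * matLog σ).trace = (σ * matLog σ).trace) :
    relEntropy ρ σ = vnEntropy σ - vnEntropy ρ := by
  rw [relEntropy, mul_sub, trace_sub, h, Complex.sub_re, vnEntropy_eq_neg_re_trace_mul_matLog hρ,
    vnEntropy_eq_neg_re_trace_mul_matLog hσ]
  ring

end Entropy

noncomputable def gibbsState {n : Type*} [Fintype n] [DecidableEq n] (H : Matrix n n ℂ) :
    Matrix n n ℂ :=
  ((NormedSpace.exp H).trace)⁻¹ • NormedSpace.exp H

section Gibbs

variable {n : Type*} [Fintype n] [DecidableEq n] {H : Matrix n n ℂ}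

-- `NormedSpace.exp` on matrices needs no norm; the L2 operator norm is opened only to apply the
-- C⋆-algebra lemma, and it induces the same topology.
open scoped Matrix.Norms.L2Operator in
theorem Matrix.IsHermitian.exp_eq_cfc (hH : H.IsHermitian) : NormedSpace.exp H = cfc Real.exp H :=
  (CFC.real_exp_eq_normedSpace_exp hH.isSelfAdjoint).symm

lemma trace_exp_eq_sum_exp_eigenvalues (hH : H.IsHermitian) :
    (NormedSpace.exp H).trace = ((∑ i, Real.exp (hH.eigenvalues i) : ℝ) : ℂ) := by
  rw [hH.exp_eq_cfc, hH.trace_cfc, Complex.ofReal_sum]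

lemma gibbsState_eq_cfc (hH : H.IsHermitian) :
    gibbsState H = cfc (fun x => (∑ i, Real.exp (hH.eigenvalues i))⁻¹ * Real.exp x) H := by
  rw [cfc_const_mul _ _ _ (H.finite_real_spectrum.continuousOn _), gibbsState,
    trace_exp_eq_sum_exp_eigenvalues hH, hH.exp_eq_cfc, ← Complex.ofReal_inv, Complex.coe_smul]

variable [Nonempty n]

lemma sum_exp_eigenvalues_pos (hH : H.IsHermitian) : 0 < ∑ i, Real.exp (hH.eigenvalues i) :=
  Finset.sum_pos (fun _ _ => Real.exp_pos _) Finset.univ_nonempty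

open scoped MatrixOrder in
theorem gibbsState_posDef (hH : H.IsHermitian) : (gibbsState H).PosDef := by
  rw [← isStrictlyPositive_iff_posDef, gibbsState_eq_cfc hH,
    cfc_isStrictlyPositive_iff _ H (H.finite_real_spectrum.continuousOn _) hH.isSelfAdjoint]
  exact fun x _ => mul_pos (inv_pos.2 (sum_exp_eigenvalues_pos hH)) (Real.exp_pos x)

theorem trace_gibbsState (hH : H.IsHermitian) : (gibbsState H).trace = 1 := by
  have hZ : (NormedSpace.exp H).trace ≠ 0 := by
    rw [trace_exp_eq_sum_exp_eigenvalues hH, Complex.ofReal_ne_zero]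
    exact (sum_exp_eigenvalues_pos hH).ne'
  rw [gibbsState, trace_smul, smul_eq_mul, inv_mul_cancel₀ hZ]

theorem matLog_gibbsState (hH : H.IsHermitian) :
    matLog (gibbsState H) = H - algebraMap ℝ _ (log (∑ i, Real.exp (hH.eigenvalues i))) := by
  rw [matLog, matFun_eq_cfc (gibbsState_posDef hH).1, gibbsState_eq_cfc hH, ← cfc_comp' log _ _
    ((H.finite_real_spectrum.image _).continuousOn _) (H.finite_real_spectrum.continuousOn _)]
  have hlog : (fun x => log ((∑ i, Real.exp (hH.eigenvalues i))⁻¹ * Real.exp x)) =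
      fun x => x + -log (∑ i, Real.exp (hH.eigenvalues i)) := by
    ext x
    rw [log_mul (inv_ne_zero (sum_exp_eigenvalues_pos hH).ne') (Real.exp_ne_zero x), log_inv,
      log_exp, add_comm]
  rw [hlog, cfc_add_const _ _ _ (H.finite_real_spectrum.continuousOn _) hH.isSelfAdjoint,
    cfc_id' ℝ H, map_neg, sub_eq_add_neg]

theorem relEntropy_gibbsState {ρ : Matrix n n ℂ} (hH : H.IsHermitian) (hρ : ρ.IsHermitian)
    (htr : ρ.trace = 1) (hE : (ρ * H).trace = (gibbsState H * H).trace) :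
    relEntropy ρ (gibbsState H) = vnEntropy (gibbsState H) - vnEntropy ρ := by
  refine relEntropy_eq_vnEntropy_sub_vnEntropy hρ (gibbsState_posDef hH).1 ?_
  simp only [matLog_gibbsState hH, mul_sub, trace_sub, Algebra.algebraMap_eq_smul_one,
    Matrix.mul_smul, Matrix.mul_one, trace_smul, hE, htr, trace_gibbsState hH]

end Gibbs

/-- Jaynes' maximum entropy principle: the Gibbs state
`ρ* = exp(∑ᵢ λᵢ Θᵢ)/Tr[exp(∑ᵢ λᵢ Θᵢ)]` satisfying the expectation constraints
`Tr[ρ* Θᵢ] = θᵢ` is the unique maximizer of the von Neumann entropy among all density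
operators satisfying the same constraints. -/
theorem maxEnt_gibbs_state {n : Type*} [Fintype n] [DecidableEq n] {m : ℕ}
    (Θ : Fin m → Matrix n n ℂ) (hΘ : ∀ i, (Θ i).IsHermitian)
    (θ lam : Fin m → ℝ)
    (ρstar : Matrix n n ℂ)
    (hρstar : ρstar = ((NormedSpace.exp (∑ i, (lam i : ℂ) • Θ i)).trace)⁻¹ •
        NormedSpace.exp (∑ i, (lam i : ℂ) • Θ i))
    (hconstr : ∀ i, (ρstar * Θ i).trace = (θ i : ℂ)) :
    ∀ ρ : Matrix n n ℂ, IsDensity ρ → (∀ i, (ρ * Θ i).trace = (θ i : ℂ)) →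
      vnEntropy ρ ≤ vnEntropy ρstar ∧ (vnEntropy ρ = vnEntropy ρstar ↔ ρ = ρstar) := by
  intro ρ hρ hρc
  have : Nonempty n := not_isEmpty_iff.1 fun _ => by simpa using hρ.2
  set H := ∑ i, (lam i : ℂ) • Θ i
  have hH : H.IsHermitian := isSelfAdjoint_sum _ fun i _ => (hΘ i).smul (Complex.conj_ofReal _)
  replace hρstar : ρstar = gibbsState H := hρstar
  subst hρstar
  have hE : (ρ * H).trace = (gibbsState H * H).trace := by
    simp only [H, Matrix.mul_sum, trace_sum, Matrix.mul_smul, trace_smul, hρc, hconstr]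
  have hσ := gibbsState_posDef hH
  have hrel := relEntropy_gibbsState hH hρ.1.1 hρ.2 hE
  have hklein := re_trace_sub_le_relEntropy hρ.1 hσ
  rw [hρ.2, trace_gibbsState hH, sub_self, Complex.zero_re] at hklein
  refine ⟨by linarith, fun heq => eq_of_relEntropy_eq_re_trace_sub hρ.1 hσ ?_, fun h => h ▸ rfl⟩
  rw [hρ.2, trace_gibbsState hH, hrel, heq, sub_self, sub_self, Complex.zero_re]
end

section
/- There exist density operators ρ_AB on ℂ²⊗ℂ² and ρ_BC on ℂ²⊗ℂ² with Tr_A(ρ_AB) = Tr_C(ρ_BC) that are compatible (i.e., there exists a density operator ρ_ABC on ℂ²⊗ℂ²⊗ℂ² with Tr_C(ρ_ABC) = ρ_AB and Tr_A(ρ_ABC) = ρ_BC), yet no density operator ρ_ABC with these two marginals satisfies I_{ρ_ABC}(A:C|B) = 0. Hence the set of pairs of bipartite marginals compatible with a quantum Markov chain is strictly contained in the set of compatible pairs of bipartite marginals. -/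
open scoped Matrix ComplexOrder

variable {A B C : Type*}

/-! The W state `|W⟩ = (|001⟩ + |010⟩ + |100⟩)/√3` has equal two-qubit marginals
`ρ_AB = ρ_BC`, whose kernel is spanned by `|11⟩` and `|01⟩ - |10⟩`. A positive semidefinite
extension is annihilated by `ker ρ_AB ⊗ ℂ²` and by `ℂ² ⊗ ker ρ_BC`, which confines it to
`span {|000⟩, |W⟩}`; the diagonal of the marginals then rules out `|000⟩`, so
`|W⟩⟨W|` is the only extension. Being pure, it has `S(ABC) = 0`, while
`S(AB) = S(BC) = S(B) = h(1/3)`, so `I(A:C|B) = h(1/3) > 0`. -/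

open Polynomial

theorem Matrix.IsHermitian.trace_cfc_s6 {n 𝕜 : Type*} [RCLike 𝕜] [Fintype n] [DecidableEq n]
    {M : Matrix n n 𝕜} (hM : M.IsHermitian) (f : ℝ → ℝ) :
    (cfc f M).trace = ∑ i, (f (hM.eigenvalues i) : 𝕜) := by
  rw [hM.cfc_eq, Matrix.IsHermitian.cfc, Unitary.conjStarAlgAut_apply, Matrix.trace_mul_cycle,
    Unitary.coe_star_mul_self, Matrix.one_mul, Matrix.trace_diagonal]
  rfl

theorem Matrix.PosSemidef.apply_eq_zero_of_diag_eq_zero {n 𝕜 : Type*} [RCLike 𝕜] [Fintype n]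
    [DecidableEq n] {ρ : Matrix n n 𝕜} (hρ : ρ.PosSemidef) {i : n} (hi : ρ i i = 0) (j : n) :
    ρ j i = 0 := by
  have := (hρ.dotProduct_mulVec_zero_iff (Pi.single i 1)).mp (by simp [hi])
  simpa using congrFun this j

theorem spectrum.subset_isRoot_of_aeval_eq_zero {𝕜 R : Type*} [Field 𝕜] [Ring R]
    [Algebra 𝕜 R] {a : R} {q : 𝕜[X]} (hq : aeval a q = 0) : spectrum 𝕜 a ⊆ {x | q.IsRoot x} := by
  intro x hx
  have h := spectrum.subset_polynomial_aeval a q ⟨x, hx, rfl⟩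
  rw [hq, spectrum.mem_iff, sub_zero] at h
  by_contra hne
  exact h ((Units.mk0 _ hne).isUnit.map (algebraMap 𝕜 R))

theorem spectrum_subset_thirds {R : Type*} [Ring R] [Algebra ℝ R] {a : R}
    (ha : a * a * a - a * a + (2/9 : ℝ) • a = 0) : spectrum ℝ a ⊆ {0, 1/3, 2/3} := by
  have hq : aeval a (X ^ 3 - X ^ 2 + C (2/9 : ℝ) * X) = 0 := by
    simpa [pow_succ, Algebra.smul_def] using ha
  intro x hx
  have hroot : x * (x - 1/3) * (x - 2/3) = 0 := by
    have := spectrum.subset_isRoot_of_aeval_eq_zero hq hx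
    simp only [Set.mem_ofPred_eq, IsRoot.def, eval_add, eval_sub, eval_mul, eval_pow, eval_C,
      eval_X] at this
    linear_combination this
  rcases mul_eq_zero.mp hroot with h | h
  · rcases mul_eq_zero.mp h with h | h
    · simp [h]
    · simp [sub_eq_zero.mp h]
  · simp [sub_eq_zero.mp h]

section Entropy

variable {n : Type*} [Fintype n] [DecidableEq n] {M : Matrix n n ℂ}

theorem vnEntropy_eq_neg_re_trace_cfc (hM : M.IsHermitian) :
    vnEntropy M = -(cfc (fun x => x * Real.log x) M).trace.re := by
  rw [vnEntropy, dif_pos hM, hM.trace_cfc_s6]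
  simp [Complex.re_sum]

theorem vnEntropy_eq_of_eqOn_spectrum (hM : M.IsHermitian) {p : ℝ[X]}
    (hp : (spectrum ℝ M).EqOn (fun x => x * Real.log x) p.eval) :
    vnEntropy M = -(aeval M p).trace.re := by
  rw [vnEntropy_eq_neg_re_trace_cfc hM, cfc_congr hp, cfc_polynomial p M]

theorem vnEntropy_eq_zero_of_isIdempotentElem (hM : M.IsHermitian) (hP : IsIdempotentElem M) :
    vnEntropy M = 0 := by
  have h : (spectrum ℝ M).EqOn (fun x => x * Real.log x) (0 : ℝ[X]).eval := by
    intro x hx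
    rcases hP.spectrum_subset ℝ hx with rfl | rfl <;> simp
  simp [vnEntropy_eq_of_eqOn_spectrum hM h]

/-- On `{0, 1/3, 2/3}` the function `x log x` agrees with a quadratic polynomial, so the entropy
is determined by `tr M` and `tr M²`. -/
theorem vnEntropy_eq_of_spectrum_subset_thirds (hM : M.IsHermitian)
    (hspec : spectrum ℝ M ⊆ {0, 1/3, 2/3}) (htr : M.trace = 1) (hpur : (M * M).trace = 5/9) :
    vnEntropy M = Real.log 3 - 2/3 * Real.log 2 := by
  have h : (spectrum ℝ M).EqOn (fun x => x * Real.log x)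
      (C (-(Real.log 3 + Real.log 2)) * X + C (3 * Real.log 2) * X ^ 2).eval := by
    intro x hx
    simp only [eval_add, eval_mul, eval_C, eval_X, eval_pow]
    rcases hspec hx with rfl | rfl | rfl
    · simp
    · rw [one_div, Real.log_inv]; ring
    · rw [Real.log_div two_ne_zero three_ne_zero]; ring
  rw [vnEntropy_eq_of_eqOn_spectrum hM h]
  simp only [map_add, map_mul, aeval_C, aeval_X, Algebra.algebraMap_eq_smul_one,
    smul_mul_assoc, one_mul, sq, Matrix.trace_add, Matrix.trace_smul, htr, hpur]
  simp only [Complex.add_re, Complex.smul_re, Complex.one_re, smul_eq_mul]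
  norm_num
  ring

end Entropy

section PartialTrace

variable [Fintype A] [Fintype B] [Fintype C]

/-- The vector `v ⊗ e_c`. -/
def tensorSingleC [DecidableEq C] (v : A × B → ℂ) (c : C) : A × B × C → ℂ :=
  fun x => if x.2.2 = c then v (x.1, x.2.1) else 0

/-- The vector `e_a ⊗ v`. -/
def tensorSingleA [DecidableEq A] (a : A) (v : B × C → ℂ) : A × B × C → ℂ :=
  fun x => if x.1 = a then v x.2 else 0

theorem dotProduct_tensorSingleC [DecidableEq C] (w : A × B × C → ℂ) (v : A × B → ℂ) (c : C) :
    w ⬝ᵥ tensorSingleC v c = (fun p : A × B => w (p.1, p.2, c)) ⬝ᵥ v := by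
  simp [dotProduct, tensorSingleC, Fintype.sum_prod_type]

theorem dotProduct_tensorSingleA [DecidableEq A] (w : A × B × C → ℂ) (a : A) (v : B × C → ℂ) :
    w ⬝ᵥ tensorSingleA a v = (fun p : B × C => w (a, p)) ⬝ᵥ v := by
  simp [dotProduct, tensorSingleA, Fintype.sum_prod_type]

omit [Fintype A] [Fintype B] [Fintype C] in
theorem star_tensorSingleC [DecidableEq C] (v : A × B → ℂ) (c : C) :
    star (tensorSingleC v c) = tensorSingleC (star v) c := by
  ext x; simp only [tensorSingleC, Pi.star_apply]; split_ifs <;> simp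

theorem star_dotProduct_ptC_mulVec [DecidableEq C] (ρ : Matrix (A × B × C) (A × B × C) ℂ)
    (v : A × B → ℂ) :
    star v ⬝ᵥ (ptC ρ *ᵥ v) = ∑ c, star (tensorSingleC v c) ⬝ᵥ (ρ *ᵥ tensorSingleC v c) := by
  simp only [star_tensorSingleC]
  simp only [dotProduct_comm (tensorSingleC (star v) _), dotProduct_tensorSingleC, Matrix.mulVec]
  simp only [dotProduct, Matrix.mulVec, ptC, Pi.star_apply, Finset.sum_mul, Finset.mul_sum]
  conv_rhs => rw [Finset.sum_comm]
  refine Finset.sum_congr rfl fun p _ => ?_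
  conv_rhs => rw [Finset.sum_comm]
  exact Finset.sum_congr rfl fun q _ => Finset.sum_congr rfl fun c _ => by ring

omit [Fintype A] [Fintype B] [Fintype C] in
theorem star_tensorSingleA [DecidableEq A] (a : A) (v : B × C → ℂ) :
    star (tensorSingleA a v) = tensorSingleA a (star v) := by
  ext x; simp only [tensorSingleA, Pi.star_apply]; split_ifs <;> simp

theorem star_dotProduct_ptA_mulVec [DecidableEq A] (ρ : Matrix (A × B × C) (A × B × C) ℂ)
    (v : B × C → ℂ) :
    star v ⬝ᵥ (ptA ρ *ᵥ v) = ∑ a, star (tensorSingleA a v) ⬝ᵥ (ρ *ᵥ tensorSingleA a v) := by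
  simp only [star_tensorSingleA]
  simp only [dotProduct_comm (tensorSingleA _ (star v)), dotProduct_tensorSingleA, Matrix.mulVec]
  simp only [dotProduct, Matrix.mulVec, ptA, Pi.star_apply, Finset.sum_mul, Finset.mul_sum]
  conv_rhs => rw [Finset.sum_comm]
  refine Finset.sum_congr rfl fun p _ => ?_
  conv_rhs => rw [Finset.sum_comm]
  exact Finset.sum_congr rfl fun q _ => Finset.sum_congr rfl fun c _ => by ring

variable {ρ : Matrix (A × B × C) (A × B × C) ℂ}

omit [Fintype A] [Fintype B] in
theorem Matrix.IsHermitian.ptC (hρ : ρ.IsHermitian) : (ptC ρ).IsHermitian := by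
  ext x y
  simp only [Matrix.conjTranspose_apply, _root_.ptC, star_sum]
  exact Finset.sum_congr rfl fun c _ => hρ.apply _ _

omit [Fintype B] [Fintype C] in
theorem Matrix.IsHermitian.ptA (hρ : ρ.IsHermitian) : (ptA ρ).IsHermitian := by
  ext x y
  simp only [Matrix.conjTranspose_apply, _root_.ptA, star_sum]
  exact Finset.sum_congr rfl fun a _ => hρ.apply _ _

theorem Matrix.PosSemidef.ptC [DecidableEq C] (hρ : ρ.PosSemidef) : (ptC ρ).PosSemidef :=
  .of_dotProduct_mulVec_nonneg hρ.isHermitian.ptC fun v => by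
    rw [star_dotProduct_ptC_mulVec]
    exact Finset.sum_nonneg fun c _ => hρ.dotProduct_mulVec_nonneg _

theorem Matrix.PosSemidef.ptA [DecidableEq A] (hρ : ρ.PosSemidef) : (ptA ρ).PosSemidef :=
  .of_dotProduct_mulVec_nonneg hρ.isHermitian.ptA fun v => by
    rw [star_dotProduct_ptA_mulVec]
    exact Finset.sum_nonneg fun a _ => hρ.dotProduct_mulVec_nonneg _

theorem trace_ptC : (ptC ρ).trace = ρ.trace := by
  simp [Matrix.trace, ptC, Fintype.sum_prod_type]

theorem trace_ptA : (ptA ρ).trace = ρ.trace := by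
  simp only [Matrix.trace, Matrix.diag, ptA]
  rw [Fintype.sum_prod_type (fun x => ρ x x)]
  exact Finset.sum_comm

theorem IsDensity.ptC [DecidableEq C] (hρ : IsDensity ρ) : IsDensity (ptC ρ) :=
  ⟨hρ.1.ptC, trace_ptC.trans hρ.2⟩

theorem IsDensity.ptA [DecidableEq A] (hρ : IsDensity ρ) : IsDensity (ptA ρ) :=
  ⟨hρ.1.ptA, trace_ptA.trans hρ.2⟩

theorem bptFst_ptC : bptFst (ptC ρ) = ptAC ρ := rfl

theorem bptSnd_ptA : bptSnd (ptA ρ) = ptAC ρ := by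
  ext b b'
  exact Finset.sum_comm

theorem dotProduct_eq_zero_of_mulVec_eq_zero_of_ptC [DecidableEq C] (hρ : ρ.PosSemidef)
    {v : A × B → ℂ} (hv : ptC ρ *ᵥ v = 0) (x : A × B × C) (c : C) :
    (fun p : A × B => ρ x (p.1, p.2, c)) ⬝ᵥ v = 0 := by
  have hv := congrArg (star v ⬝ᵥ ·) hv
  rw [dotProduct_zero, star_dotProduct_ptC_mulVec, Finset.sum_eq_zero_iff_of_nonneg
    fun c _ => hρ.dotProduct_mulVec_nonneg _] at hv
  have := congrFun ((hρ.dotProduct_mulVec_zero_iff _).mp (hv c (Finset.mem_univ c))) x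
  rwa [Matrix.mulVec, dotProduct_tensorSingleC] at this

theorem dotProduct_eq_zero_of_mulVec_eq_zero_of_ptA [DecidableEq A] (hρ : ρ.PosSemidef)
    {v : B × C → ℂ} (hv : ptA ρ *ᵥ v = 0) (x : A × B × C) (a : A) :
    (fun p : B × C => ρ x (a, p)) ⬝ᵥ v = 0 := by
  have hv := congrArg (star v ⬝ᵥ ·) hv
  rw [dotProduct_zero, star_dotProduct_ptA_mulVec, Finset.sum_eq_zero_iff_of_nonneg
    fun a _ => hρ.dotProduct_mulVec_nonneg _] at hv
  have := congrFun ((hρ.dotProduct_mulVec_zero_iff _).mp (hv a (Finset.mem_univ a))) x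
  rwa [Matrix.mulVec, dotProduct_tensorSingleA] at this

noncomputable section WState

def wVec : Fin 2 × Fin 2 × Fin 2 → ℂ :=
  fun x => if x = (0, 0, 1) ∨ x = (0, 1, 0) ∨ x = (1, 0, 0) then 1 else 0

def wState : Matrix (Fin 2 × Fin 2 × Fin 2) (Fin 2 × Fin 2 × Fin 2) ℂ :=
  (3 : ℂ)⁻¹ • Matrix.vecMulVec wVec (star wVec)

/-- `(|00⟩⟨00| + 2 |ψ⁺⟩⟨ψ⁺|) / 3` with `ψ⁺ = (|01⟩ + |10⟩) / √2`. -/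
def wStateAB : Matrix (Fin 2 × Fin 2) (Fin 2 × Fin 2) ℂ :=
  fun p q => if (p = (0, 0) ∧ q = (0, 0)) ∨
      ((p = (0, 1) ∨ p = (1, 0)) ∧ (q = (0, 1) ∨ q = (1, 0))) then 1/3 else 0

def wStateB : Matrix (Fin 2) (Fin 2) ℂ := Matrix.diagonal ![2/3, 1/3]

theorem star_wVec : star wVec = wVec := by
  ext x; simp only [wVec, Pi.star_apply]; split_ifs <;> simp

theorem star_wVec_dotProduct_wVec : star wVec ⬝ᵥ wVec = 3 := by
  norm_num [dotProduct, wVec, Fintype.sum_prod_type, Fin.sum_univ_two]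

theorem wState_apply (x y : Fin 2 × Fin 2 × Fin 2) : wState x y = wVec x * wVec y / 3 := by
  simp [wState, star_wVec, Matrix.vecMulVec_apply, div_eq_inv_mul]

theorem isDensity_wState : IsDensity wState :=
  ⟨(Matrix.posSemidef_vecMulVec_self_star wVec).smul (by positivity),
    by rw [wState, Matrix.trace_smul, Matrix.trace_vecMulVec, dotProduct_comm,
      star_wVec_dotProduct_wVec, smul_eq_mul, inv_mul_cancel₀ three_ne_zero]⟩

theorem isIdempotentElem_wState : IsIdempotentElem wState := by
  rw [IsIdempotentElem, wState, smul_mul_smul, Matrix.vecMulVec_mul_vecMulVec,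
    star_wVec_dotProduct_wVec, Matrix.vecMulVec_smul, smul_smul]
  norm_num

theorem ptC_wState : ptC wState = wStateAB := by
  ext ⟨a, b⟩ ⟨a', b'⟩
  fin_cases a <;> fin_cases b <;> fin_cases a' <;> fin_cases b' <;>
    simp [ptC, wState_apply, wVec, wStateAB, Fin.sum_univ_two, Prod.ext_iff]

theorem ptA_wState : ptA wState = wStateAB := by
  ext ⟨b, c⟩ ⟨b', c'⟩
  fin_cases b <;> fin_cases c <;> fin_cases b' <;> fin_cases c' <;>
    simp [ptA, wState_apply, wVec, wStateAB, Fin.sum_univ_two, Prod.ext_iff]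

theorem ptAC_wState : ptAC wState = wStateB := by
  ext b b'
  fin_cases b <;> fin_cases b' <;>
    norm_num [ptAC, wState_apply, wVec, wStateB, Fin.sum_univ_two, Prod.ext_iff]

theorem wStateAB_cubic : wStateAB * wStateAB * wStateAB - wStateAB * wStateAB +
    (2/9 : ℝ) • wStateAB = 0 := by
  ext ⟨a, b⟩ ⟨a', b'⟩
  fin_cases a <;> fin_cases b <;> fin_cases a' <;> fin_cases b' <;>
    norm_num [Matrix.mul_apply, wStateAB, Fintype.sum_prod_type, Fin.sum_univ_two, Prod.ext_iff]

theorem wStateB_cubic : wStateB * wStateB * wStateB - wStateB * wStateB +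
    (2/9 : ℝ) • wStateB = 0 := by
  ext b b'
  fin_cases b <;> fin_cases b' <;> norm_num [wStateB]

theorem trace_wStateAB_mul_self : (wStateAB * wStateAB).trace = 5/9 := by
  norm_num [Matrix.trace, Matrix.mul_apply, wStateAB, Fintype.sum_prod_type, Fin.sum_univ_two,
    Prod.ext_iff]

theorem trace_wStateB_mul_self : (wStateB * wStateB).trace = 5/9 := by
  norm_num [Matrix.trace, wStateB, Fin.sum_univ_two]

theorem vnEntropy_wStateAB : vnEntropy wStateAB = Real.log 3 - 2/3 * Real.log 2 := by
  have h := ptC_wState ▸ isDensity_wState.ptC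
  exact vnEntropy_eq_of_spectrum_subset_thirds h.1.isHermitian
    (spectrum_subset_thirds wStateAB_cubic) h.2 trace_wStateAB_mul_self

theorem vnEntropy_wStateB : vnEntropy wStateB = Real.log 3 - 2/3 * Real.log 2 := by
  have hB : wStateB.IsHermitian :=
    Matrix.isHermitian_diagonal_iff.mpr fun b => by fin_cases b <;> simp [isSelfAdjoint_iff]
  have htr : wStateB.trace = 1 := by
    norm_num [wStateB, Matrix.trace, Fin.sum_univ_two]
  exact vnEntropy_eq_of_spectrum_subset_thirds hB
    (spectrum_subset_thirds wStateB_cubic) htr trace_wStateB_mul_self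

theorem qcmi_wState : qcmi wState = Real.log 3 - 2/3 * Real.log 2 := by
  rw [qcmi, ptC_wState, ptA_wState, ptAC_wState, vnEntropy_wStateAB, vnEntropy_wStateB,
    vnEntropy_eq_zero_of_isIdempotentElem isDensity_wState.1.isHermitian isIdempotentElem_wState]
  ring

theorem wStateAB_mulVec_single_one_one : wStateAB *ᵥ Pi.single (1, 1) 1 = 0 := by
  ext ⟨a, b⟩
  fin_cases a <;> fin_cases b <;> simp [wStateAB, Prod.ext_iff]

theorem wStateAB_mulVec_single_sub_single :
    wStateAB *ᵥ (Pi.single (0, 1) 1 - Pi.single (1, 0) 1) = 0 := by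
  ext ⟨a, b⟩
  fin_cases a <;> fin_cases b <;>
    simp [wStateAB, Matrix.mulVec_sub, Prod.ext_iff]

theorem apply_eq_of_ptC_ptA_eq_wStateAB
    {ρ : Matrix (Fin 2 × Fin 2 × Fin 2) (Fin 2 × Fin 2 × Fin 2) ℂ} (hρ : ρ.PosSemidef)
    (hC : ptC ρ = wStateAB) (hA : ptA ρ = wStateAB) (x y : Fin 2 × Fin 2 × Fin 2) :
    ρ x y = ρ x (0, 0, 0) * (if y = (0, 0, 0) then 1 else 0) + ρ x (0, 1, 0) * wVec y := by
  have h₁C : ∀ c, ρ x (1, 1, c) = 0 := fun c => by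
    have := dotProduct_eq_zero_of_mulVec_eq_zero_of_ptC hρ (hC ▸ wStateAB_mulVec_single_one_one) x c
    rwa [dotProduct_single_one] at this
  have h₁A : ∀ a, ρ x (a, 1, 1) = 0 := fun a => by
    have := dotProduct_eq_zero_of_mulVec_eq_zero_of_ptA hρ (hA ▸ wStateAB_mulVec_single_one_one) x a
    rwa [dotProduct_single_one] at this
  have h₂C : ∀ c, ρ x (0, 1, c) = ρ x (1, 0, c) := fun c => by
    have := dotProduct_eq_zero_of_mulVec_eq_zero_of_ptC hρ (hC ▸ wStateAB_mulVec_single_sub_single) x c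
    rwa [dotProduct_sub, dotProduct_single_one, dotProduct_single_one, sub_eq_zero] at this
  have h₂A : ∀ a, ρ x (a, 0, 1) = ρ x (a, 1, 0) := fun a => by
    have := dotProduct_eq_zero_of_mulVec_eq_zero_of_ptA hρ (hA ▸ wStateAB_mulVec_single_sub_single) x a
    rwa [dotProduct_sub, dotProduct_single_one, dotProduct_single_one, sub_eq_zero] at this
  obtain ⟨a, b, c⟩ := y
  fin_cases a <;> fin_cases b <;> fin_cases c <;> simp [h₁C, h₁A, ← h₂C, h₂A, wVec]

theorem eq_wState_of_ptC_ptA {ρ : Matrix (Fin 2 × Fin 2 × Fin 2) (Fin 2 × Fin 2 × Fin 2) ℂ}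
    (hρ : ρ.PosSemidef) (hC : ptC ρ = wStateAB) (hA : ptA ρ = wStateAB) : ρ = wState := by
  have hcol := apply_eq_of_ptC_ptA_eq_wStateAB hρ hC hA
  have hstar (x y) : ρ x y = star (ρ y x) := (hρ.isHermitian.apply x y).symm
  have h010 : ρ (0, 1, 0) (0, 1, 0) = 1/3 := by
    have h := congrFun₂ hC (0, 1) (0, 1)
    simp only [ptC, Fin.sum_univ_two] at h
    rw [hcol (0, 1, 1) (0, 1, 1)] at h
    simpa [wVec, wStateAB] using h
  have h001 : ρ (0, 0, 1) (0, 0, 1) = 1/3 := by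
    rw [hcol (0, 0, 1) (0, 0, 1), hstar (0, 0, 1) (0, 1, 0), hcol (0, 1, 0) (0, 0, 1), h010]
    simp [wVec]
  have h000 : ρ (0, 0, 0) (0, 0, 0) = 0 := by
    have h := congrFun₂ hC (0, 0) (0, 0)
    simp only [ptC, Fin.sum_univ_two, h001] at h
    simpa [wStateAB] using h
  have h0 := hρ.apply_eq_zero_of_diag_eq_zero h000
  ext x y
  rw [hcol x y, h0, hstar x (0, 1, 0), hcol (0, 1, 0) x, h0, h010, wState_apply]
  have hw : star (wVec x) = wVec x := congrFun star_wVec x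
  simp only [zero_mul, zero_add, star_mul', hw, star_div₀, star_one, star_ofNat]
  ring

end WState

/-- There exist compatible pairs of two-qubit marginals `ρ_AB`, `ρ_BC`
(agreeing on `B`, and admitting a common tripartite extension) which are not compatible
with any quantum Markov chain in order A−B−C: no extension has `I(A:C|B) = 0`. Hence the
set of QMC-compatible pairs is strictly contained in the set of compatible pairs. -/
theorem compatible_pair_not_qmc_compatible :
    ∃ (ρAB : Matrix (Fin 2 × Fin 2) (Fin 2 × Fin 2) ℂ)
      (ρBC : Matrix (Fin 2 × Fin 2) (Fin 2 × Fin 2) ℂ),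
      IsDensity ρAB ∧ IsDensity ρBC ∧ bptFst ρAB = bptSnd ρBC ∧
      (∃ ρ : Matrix (Fin 2 × Fin 2 × Fin 2) (Fin 2 × Fin 2 × Fin 2) ℂ,
        IsDensity ρ ∧ ptC ρ = ρAB ∧ ptA ρ = ρBC) ∧
      ¬ (∃ ρ : Matrix (Fin 2 × Fin 2 × Fin 2) (Fin 2 × Fin 2 × Fin 2) ℂ,
        IsDensity ρ ∧ ptC ρ = ρAB ∧ ptA ρ = ρBC ∧ qcmi ρ = 0) := by
  refine ⟨wStateAB, wStateAB, ptC_wState ▸ isDensity_wState.ptC,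
    ptA_wState ▸ isDensity_wState.ptA, ?_, ⟨wState, isDensity_wState, ptC_wState, ptA_wState⟩, ?_⟩
  · calc bptFst wStateAB = ptAC wState := by rw [← ptC_wState, bptFst_ptC]
      _ = bptSnd wStateAB := by rw [← ptA_wState, bptSnd_ptA]
  · rintro ⟨ρ, hρ, hC, hA, hqcmi⟩
    rw [eq_wState_of_ptC_ptA hρ.1 hC hA, qcmi_wState] at hqcmi
    have hlog : Real.log 2 < Real.log 3 := Real.log_lt_log two_pos (by norm_num)
    linarith [Real.log_pos one_lt_two]
end PartialTrace
end

section
/- Let (X,Y,Z) be an ordering of the three factors of a tripartite space, let ρ be a density operator on the tripartite space, and let σ be an invertible density operator on the same space with Tr_Z σ = Tr_Z ρ = ρ_XY and Tr_X σ = Tr_X ρ = ρ_YZ, whose logarithm decomposes as log σ = θ_XY + θ_YZ + θ_Y for Hermitian operators θ_XY, θ_YZ, θ_Y acting on the indicated factors (extended by identities). Then S(ρ || σ) = S(σ) − S(ρ). -/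
/-!
Since `log σ = θ_XY + θ_YZ + θ_Y` with each term acting on `XY`, `YZ` or `Y` only,
`Tr(ρ log σ)` depends on `ρ` only through its marginals `ρ_XY`, `ρ_YZ` and `ρ_Y = Tr_X ρ_XY`,
which `σ` shares. Hence `Tr(ρ log σ) = Tr(σ log σ) = -S(σ)`, while `Tr(ρ log ρ) = -S(ρ)`.
-/

open scoped Matrix ComplexOrder

variable {A B C : Type*}

open Matrix
open scoped Kronecker

theorem Matrix.IsHermitian.trace_mul_matFun {n : Type*} [Fintype n] [DecidableEq n]
    {ρ : Matrix n n ℂ} (hρ : ρ.IsHermitian) (f : ℝ → ℝ) :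
    (ρ * matFun f ρ).trace = ∑ i, ((hρ.eigenvalues i * f (hρ.eigenvalues i) : ℝ) : ℂ) := by
  set U : Matrix n n ℂ := (hρ.eigenvectorUnitary : Matrix n n ℂ)
  have hdiag : star U * ρ * U = diagonal (RCLike.ofReal ∘ hρ.eigenvalues) := by
    simpa only [Unitary.conjStarAlgAut_star_apply] using
      hρ.conjStarAlgAut_star_eigenvectorUnitary
  rw [matFun, dif_pos hρ, ← Matrix.mul_assoc, trace_mul_comm, ← Matrix.mul_assoc,
    ← Matrix.mul_assoc, hdiag, diagonal_mul_diagonal, trace_diagonal]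
  simp

theorem Matrix.IsHermitian.trace_mul_matLog_self {n : Type*} [Fintype n] [DecidableEq n]
    {ρ : Matrix n n ℂ} (hρ : ρ.IsHermitian) : (ρ * matLog ρ).trace = -vnEntropy ρ := by
  rw [matLog, hρ.trace_mul_matFun, vnEntropy, dif_pos hρ, Complex.ofReal_neg, neg_neg,
    Complex.ofReal_sum]

section PartialTrace

variable {X Y Z : Type*}

theorem extBC_eq_one_kronecker [DecidableEq X] (M : Matrix (Y × Z) (Y × Z) ℂ) :
    (extBC M : Matrix (X × Y × Z) _ ℂ) = (1 : Matrix X X ℂ) ⊗ₖ M := rfl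

theorem extB_eq_extAB_one_kronecker [DecidableEq X] [DecidableEq Z] (M : Matrix Y Y ℂ) :
    (extB M : Matrix (X × Y × Z) _ ℂ) = extAB ((1 : Matrix X X ℂ) ⊗ₖ M) := rfl

variable [Fintype X] [Fintype Y] [Fintype Z]

theorem ptA_eq_bptFst (ρ : Matrix (X × Y × Z) (X × Y × Z) ℂ) : ptA ρ = bptFst ρ := rfl

theorem ptAC_eq_bptFst_ptC (ρ : Matrix (X × Y × Z) (X × Y × Z) ℂ) :
    ptAC ρ = bptFst (ptC ρ) := rfl

theorem trace_mul_one_kronecker [DecidableEq X] (N : Matrix (X × Y) (X × Y) ℂ)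
    (M : Matrix Y Y ℂ) :
    (N * ((1 : Matrix X X ℂ) ⊗ₖ M)).trace = (bptFst N * M).trace := by
  simp only [trace, diag, mul_apply, kroneckerMap_apply, one_apply, bptFst, Fintype.sum_prod_type,
    ite_mul, one_mul, zero_mul, mul_ite, mul_zero, Finset.sum_ite_irrel, Finset.sum_const_zero,
    Fintype.sum_ite_eq', Finset.sum_mul]
  conv_rhs => rw [Finset.sum_comm_cycle]

theorem trace_mul_extAB [DecidableEq Z] (ρ : Matrix (X × Y × Z) (X × Y × Z) ℂ)
    (M : Matrix (X × Y) (X × Y) ℂ) :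
    (ρ * extAB M).trace = (ptC ρ * M).trace := by
  simp only [trace, diag, mul_apply, extAB, ptC, Fintype.sum_prod_type,
    mul_ite, mul_one, mul_zero, Finset.sum_ite_eq', Finset.mem_univ, if_true, Finset.sum_mul]
  refine Finset.sum_congr rfl fun _ _ => Finset.sum_congr rfl fun _ _ => ?_
  rw [Finset.sum_comm]
  exact Finset.sum_congr rfl fun _ _ => Finset.sum_comm

theorem trace_mul_extBC [DecidableEq X] (ρ : Matrix (X × Y × Z) (X × Y × Z) ℂ)
    (M : Matrix (Y × Z) (Y × Z) ℂ) :
    (ρ * extBC M).trace = (ptA ρ * M).trace := by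
  rw [extBC_eq_one_kronecker, trace_mul_one_kronecker, ptA_eq_bptFst]

theorem trace_mul_extB [DecidableEq X] [DecidableEq Z] (ρ : Matrix (X × Y × Z) (X × Y × Z) ℂ)
    (M : Matrix Y Y ℂ) :
    (ρ * extB M).trace = (ptAC ρ * M).trace := by
  rw [extB_eq_extAB_one_kronecker, trace_mul_extAB, trace_mul_one_kronecker, ptAC_eq_bptFst_ptC]

theorem trace_mul_extAB_add_extBC_add_extB_eq_of_marginals_eq
    [DecidableEq X] [DecidableEq Z]
    {ρ σ : Matrix (X × Y × Z) (X × Y × Z) ℂ} (hXY : ptC σ = ptC ρ) (hYZ : ptA σ = ptA ρ)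
    (θXY : Matrix (X × Y) (X × Y) ℂ) (θYZ : Matrix (Y × Z) (Y × Z) ℂ) (θY : Matrix Y Y ℂ) :
    (σ * (extAB θXY + extBC θYZ + extB θY)).trace =
      (ρ * (extAB θXY + extBC θYZ + extB θY)).trace := by
  simp only [Matrix.mul_add, trace_add, trace_mul_extAB, trace_mul_extBC, trace_mul_extB,
    ptAC_eq_bptFst_ptC, hXY, hYZ]

end PartialTrace

theorem relEntropy_eq_entropy_diff_general {X Y Z : Type*} [Fintype X] [Fintype Y] [Fintype Z]
    [DecidableEq X] [DecidableEq Y] [DecidableEq Z]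
    (ρ σ : Matrix (X × Y × Z) (X × Y × Z) ℂ)
    (hρ : IsDensity ρ) (hσ : IsDensity σ)
    (hmXY : ptC σ = ptC ρ) (hmYZ : ptA σ = ptA ρ)
    (θXY : Matrix (X × Y) (X × Y) ℂ) (θYZ : Matrix (Y × Z) (Y × Z) ℂ) (θY : Matrix Y Y ℂ)
    (hlog : matLog σ = extAB θXY + extBC θYZ + extB θY) :
    relEntropy ρ σ = vnEntropy σ - vnEntropy ρ := by
  have hcross : (ρ * matLog σ).trace = (σ * matLog σ).trace := by
    rw [hlog, trace_mul_extAB_add_extBC_add_extB_eq_of_marginals_eq hmXY hmYZ]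
  rw [relEntropy, Matrix.mul_sub, trace_sub, hcross,
    hρ.1.isHermitian.trace_mul_matLog_self, hσ.1.isHermitian.trace_mul_matLog_self]
  simp only [sub_neg_eq_add, Complex.add_re, Complex.neg_re, Complex.ofReal_re]
  ring

/-- For an ordering `(X,Y,Z)` of the three factors (here the factor types
are arbitrary, so every ordering is covered), if `σ` is an invertible density operator sharing
with `ρ` the marginals `ρ_XY = Tr_Z` and `ρ_YZ = Tr_X`, and `log σ = θ_XY + θ_YZ + θ_Y` for
Hermitian operators on the indicated factors, then `S(ρ‖σ) = S(σ) − S(ρ)`. -/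
theorem relEntropy_eq_entropy_diff {X Y Z : Type*} [Fintype X] [Fintype Y] [Fintype Z]
    [DecidableEq X] [DecidableEq Y] [DecidableEq Z]
    (ρ σ : Matrix (X × Y × Z) (X × Y × Z) ℂ)
    (hρ : IsDensity ρ) (hσ : IsDensity σ) (hσinv : IsUnit σ)
    (hmXY : ptC σ = ptC ρ) (hmYZ : ptA σ = ptA ρ)
    (θXY : Matrix (X × Y) (X × Y) ℂ) (θYZ : Matrix (Y × Z) (Y × Z) ℂ) (θY : Matrix Y Y ℂ)
    (hθXY : θXY.IsHermitian) (hθYZ : θYZ.IsHermitian) (hθY : θY.IsHermitian)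
    (hlog : matLog σ = extAB θXY + extBC θYZ + extB θY) :
    relEntropy ρ σ = vnEntropy σ - vnEntropy ρ :=
  relEntropy_eq_entropy_diff_general ρ σ hρ hσ hmXY hmYZ θXY θYZ θY hlog
end

section
/- Let (X,Y,Z) be an ordering of the three factors A,B,C, let ρ be a density operator on H_A⊗H_B⊗H_C, and let σ be an invertible density operator on the same space with Tr_Z σ = Tr_Z ρ = ρ_XY and Tr_X σ = Tr_X ρ = ρ_YZ, whose logarithm decomposes as log σ = θ_XY + θ_YZ + θ_Y for Hermitian operators acting on the indicated factors (extended by identities). Then S(ρ || σ) = −[I_ρ(X:Y) + I_ρ(Y:Z)] − I_σ(X:Z|Y) + S(ρ_A) + S(ρ_B) + S(ρ_C) − S(ρ). -/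
open scoped Matrix ComplexOrder

variable {A B C : Type*}

/-- The quantum mutual information between the first two factors of a tripartite state. -/
noncomputable def qmiXY {X Y Z : Type*} [Fintype X] [Fintype Y] [Fintype Z]
    [DecidableEq X] [DecidableEq Y] [DecidableEq Z]
    (ρ : Matrix (X × Y × Z) (X × Y × Z) ℂ) : ℝ :=
  vnEntropy (ptBC ρ) + vnEntropy (ptAC ρ) - vnEntropy (ptC ρ)

/-- The quantum mutual information between the last two factors of a tripartite state. -/
noncomputable def qmiYZ {X Y Z : Type*} [Fintype X] [Fintype Y] [Fintype Z]
    [DecidableEq X] [DecidableEq Y] [DecidableEq Z]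
    (ρ : Matrix (X × Y × Z) (X × Y × Z) ℂ) : ℝ :=
  vnEntropy (ptAC ρ) + vnEntropy (ptAB ρ) - vnEntropy (ptA ρ)


section Aux

lemma conj_trace_mul {n : Type*} [Fintype n] [DecidableEq n] (U D1 D2 : Matrix n n ℂ)
    (hUU : star U * U = 1) :
    (U * D1 * star U * (U * D2 * star U)).trace = (D1 * D2).trace := by
  simp only [Matrix.mul_assoc]
  rw [← Matrix.mul_assoc (star U) U, hUU, one_mul, Matrix.trace_mul_comm]
  simp only [Matrix.mul_assoc]
  rw [hUU]
  simp [← Matrix.mul_assoc]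

lemma trace_mul_matLog {n : Type*} [Fintype n] [DecidableEq n] {ρ : Matrix n n ℂ}
    (h : ρ.IsHermitian) :
    ((ρ * matLog ρ).trace).re = -vnEntropy ρ := by
  have e1 : ρ * matLog ρ = ((h.eigenvectorUnitary : Matrix n n ℂ) *
      Matrix.diagonal (RCLike.ofReal ∘ h.eigenvalues) *
      star (h.eigenvectorUnitary : Matrix n n ℂ)) * matLog ρ :=
    congrArg (fun M => M * matLog ρ) h.spectral_theorem
  rw [e1, matLog, matFun, dif_pos h,
    conj_trace_mul _ _ _ ((Matrix.mem_unitaryGroup_iff').mp h.eigenvectorUnitary.2),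
    Matrix.diagonal_mul_diagonal, Matrix.trace_diagonal, Complex.re_sum, vnEntropy, dif_pos h,
    neg_neg]
  simp

variable {A B C : Type*} [Fintype A] [Fintype B] [Fintype C]
  [DecidableEq A] [DecidableEq B] [DecidableEq C]

lemma trace_extAB' (ρ : Matrix (A × B × C) (A × B × C) ℂ) (M : Matrix (A × B) (A × B) ℂ) :
    (ρ * extAB M).trace = ((ptC ρ) * M).trace := by
  simp only [Matrix.trace, Matrix.diag, Matrix.mul_apply, extAB, ptC, Fintype.sum_prod_type,
    mul_ite, mul_one, mul_zero, ite_mul, zero_mul, one_mul, Finset.sum_ite_irrel,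
    Finset.sum_const_zero, Finset.sum_ite_eq, Finset.sum_ite_eq',
    Finset.mem_univ, if_true, Finset.sum_mul, Finset.mul_sum]
  refine Finset.sum_congr rfl fun a _ => Finset.sum_congr rfl fun b _ => ?_
  rw [Finset.sum_comm]
  exact Finset.sum_congr rfl fun a' _ => Finset.sum_comm

lemma trace_extBC' (ρ : Matrix (A × B × C) (A × B × C) ℂ) (M : Matrix (B × C) (B × C) ℂ) :
    (ρ * extBC M).trace = ((ptA ρ) * M).trace := by
  simp only [Matrix.trace, Matrix.diag, Matrix.mul_apply, extBC, ptA, Fintype.sum_prod_type,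
    mul_ite, mul_one, mul_zero, ite_mul, zero_mul, one_mul, Finset.sum_ite_irrel,
    Finset.sum_const_zero, Finset.sum_ite_eq, Finset.sum_ite_eq',
    Finset.mem_univ, if_true, Finset.sum_mul, Finset.mul_sum]
  rw [Finset.sum_comm]
  refine Finset.sum_congr rfl fun b _ => ?_
  rw [Finset.sum_comm]
  refine Finset.sum_congr rfl fun c _ => ?_
  rw [Finset.sum_comm]
  exact Finset.sum_congr rfl fun b' _ => Finset.sum_comm

lemma trace_extB' (ρ : Matrix (A × B × C) (A × B × C) ℂ) (M : Matrix B B ℂ) :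
    (ρ * extB M).trace = ((ptAC ρ) * M).trace := by
  simp only [Matrix.trace, Matrix.diag, Matrix.mul_apply, extB, ptAC, Fintype.sum_prod_type,
    mul_ite, mul_one, mul_zero, ite_mul, zero_mul, one_mul, Finset.sum_ite_irrel,
    Finset.sum_const_zero, Finset.sum_ite_eq, Finset.sum_ite_eq',
    Finset.mem_univ, if_true, Finset.sum_mul, Finset.mul_sum]
  rw [Finset.sum_comm]
  refine Finset.sum_congr rfl fun b _ => ?_
  exact Eq.trans (Finset.sum_congr rfl fun a _ => Finset.sum_comm) Finset.sum_comm

end Aux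

/-- For an ordering `(X,Y,Z)` of the three factors (arbitrary factor types,
so every ordering is covered) and a maximum-entropy estimator `σ` sharing with `ρ` the
marginals on `XY` and `YZ`, whose logarithm decomposes as `θ_XY + θ_YZ + θ_Y`,
`S(ρ‖σ) = −[I_ρ(X:Y) + I_ρ(Y:Z)] − I_σ(X:Z|Y) + S(ρ_X) + S(ρ_Y) + S(ρ_Z) − S(ρ)`. -/
theorem relEntropy_to_maxent_estimator {X Y Z : Type*} [Fintype X] [Fintype Y] [Fintype Z]
    [DecidableEq X] [DecidableEq Y] [DecidableEq Z]
    (ρ σ : Matrix (X × Y × Z) (X × Y × Z) ℂ)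
    (hρ : IsDensity ρ) (hσ : IsDensity σ) (hσinv : IsUnit σ)
    (hmXY : ptC σ = ptC ρ) (hmYZ : ptA σ = ptA ρ)
    (θXY : Matrix (X × Y) (X × Y) ℂ) (θYZ : Matrix (Y × Z) (Y × Z) ℂ) (θY : Matrix Y Y ℂ)
    (hθXY : θXY.IsHermitian) (hθYZ : θYZ.IsHermitian) (hθY : θY.IsHermitian)
    (hlog : matLog σ = extAB θXY + extBC θYZ + extB θY) :
    relEntropy ρ σ = -(qmiXY ρ + qmiYZ ρ) - qcmi σ
      + (vnEntropy (ptBC ρ) + vnEntropy (ptAC ρ) + vnEntropy (ptAB ρ)) - vnEntropy ρ := by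
  have hρH : ρ.IsHermitian := hρ.1.1
  have hσH : σ.IsHermitian := hσ.1.1
  have hAC : ptAC σ = ptAC ρ := by
    funext b b'
    exact Finset.sum_congr rfl fun a _ => congrFun (congrFun hmXY (a, b)) (a, b')
  have hBC : ptBC σ = ptBC ρ := by
    funext a a'
    exact Finset.sum_congr rfl fun b _ => congrFun (congrFun hmXY (a, b)) (a', b)
  have hAB : ptAB σ = ptAB ρ := by
    funext c c'
    show (∑ a, ∑ b, σ (a, b, c) (a, b, c')) = ∑ a, ∑ b, ρ (a, b, c) (a, b, c')
    rw [Finset.sum_comm]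
    conv_rhs => rw [Finset.sum_comm]
    exact Finset.sum_congr rfl fun b _ => congrFun (congrFun hmYZ (b, c)) (b, c')
  have key : (ρ * matLog σ).trace = (σ * matLog σ).trace := by
    rw [hlog, Matrix.mul_add, Matrix.mul_add, Matrix.trace_add, Matrix.trace_add,
      trace_extAB', trace_extBC', trace_extB', ← hmXY, ← hmYZ, ← hAC,
      ← trace_extAB', ← trace_extBC', ← trace_extB', ← Matrix.trace_add,
      ← Matrix.trace_add, ← Matrix.mul_add, ← Matrix.mul_add]
  have hrel : relEntropy ρ σ = -vnEntropy ρ + vnEntropy σ := by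
    rw [relEntropy, Matrix.mul_sub, Matrix.trace_sub, Complex.sub_re, key,
      trace_mul_matLog hρH, trace_mul_matLog hσH]
    ring
  rw [hrel, qcmi, qmiXY, qmiYZ, hAC, hmXY, hmYZ]
  ring
end
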